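/- (Zero curvature / Lax pair for S[U;δ].) Fix integers n, m, and δ ∈ ℝ and λ ∈ ℝ. Let U, u1, u2 be smooth real functions satisfying the system S[U;δ] on an open set D ⊆ ℝ² where α ≠ β, α ≠ λ and β ≠ λ. Define the 2×2 real matrix-valued functions L := (1/(α−λ))·[[n + u1·U_α, −U_α],[u1·(n + u1·U_α), −u1·U_α]] − [[0,0],[δ²·(α−λ)·U_α, 0]] and N := (1/(β−λ))·[[m + u2·U_β, −U_β],[u2·(m + u2·U_β), −u2·U_β]] − [[0,0],[δ²·(β−λ)·U_β, 0]], where U_α := ∂U/∂α and U_β := ∂U/∂β. Then the zero-curvature condition ∂L/∂β − ∂N/∂α + L·N − N·L = 0 holds on D (so the linear system Ψ_α = L·Ψ, Ψ_β = N·Ψ is compatible). -/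

import Mathlib

/-- Partial derivative with respect to the first variable. -/
noncomputable def pda (f : ℝ × ℝ → ℝ) (p : ℝ × ℝ) : ℝ :=
  deriv (fun x => f (x, p.2)) p.1

/-- Partial derivative with respect to the second variable. -/
noncomputable def pdb (f : ℝ × ℝ → ℝ) (p : ℝ × ℝ) : ℝ :=
  deriv (fun y => f (p.1, y)) p.2


/-- Entrywise partial derivative of a matrix-valued function w.r.t. the first variable. -/
noncomputable def pdaM (L : ℝ × ℝ → Matrix (Fin 2) (Fin 2) ℝ) (p : ℝ × ℝ) :
    Matrix (Fin 2) (Fin 2) ℝ :=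
  Matrix.of fun i j => pda (fun q => L q i j) p

/-- Entrywise partial derivative of a matrix-valued function w.r.t. the second variable. -/
noncomputable def pdbM (L : ℝ × ℝ → Matrix (Fin 2) (Fin 2) ℝ) (p : ℝ × ℝ) :
    Matrix (Fin 2) (Fin 2) ℝ :=
  Matrix.of fun i j => pdb (fun q => L q i j) p

/-- The system S[U;δ]. -/
def SUdelta (n m : ℤ) (δ : ℝ) (U u1 u2 : ℝ × ℝ → ℝ) (p : ℝ × ℝ) : Prop :=
  pdb u1 p = ((u1 p - u2 p) / (p.1 - p.2)) * ((m : ℝ) - (u1 p - u2 p) * pdb U p)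
      + (p.1 - p.2) * δ ^ 2 * pdb U p ∧
  pda u2 p = ((u1 p - u2 p) / (p.1 - p.2)) * ((n : ℝ) + (u1 p - u2 p) * pda U p)
      - (p.1 - p.2) * δ ^ 2 * pda U p ∧
  pdb (pda U) p = (1 / (p.1 - p.2)) *
      (2 * (u1 p - u2 p) * pda U p * pdb U p + (n : ℝ) * pdb U p - (m : ℝ) * pda U p)

/-- The Lax matrix L of the linear problem Ψ_α = L·Ψ for S[U;δ]. -/
noncomputable def laxL (n : ℤ) (δ lam : ℝ) (U u1 : ℝ × ℝ → ℝ) (p : ℝ × ℝ) :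
    Matrix (Fin 2) (Fin 2) ℝ :=
  (1 / (p.1 - lam)) •
    !![(n : ℝ) + u1 p * pda U p, -pda U p;
       u1 p * ((n : ℝ) + u1 p * pda U p), -(u1 p * pda U p)]
  - !![0, 0; δ ^ 2 * (p.1 - lam) * pda U p, 0]

/-- The Lax matrix N of the linear problem Ψ_β = N·Ψ for S[U;δ]. -/
noncomputable def laxN (m : ℤ) (δ lam : ℝ) (U u2 : ℝ × ℝ → ℝ) (p : ℝ × ℝ) :
    Matrix (Fin 2) (Fin 2) ℝ :=
  (1 / (p.2 - lam)) •
    !![(m : ℝ) + u2 p * pdb U p, -pdb U p;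
       u2 p * ((m : ℝ) + u2 p * pdb U p), -(u2 p * pdb U p)]
  - !![0, 0; δ ^ 2 * (p.2 - lam) * pdb U p, 0]

section helpers

variable {F : Type*} [NormedAddCommGroup F] [NormedSpace ℝ F]

lemma hasDerivAt_fst (f : ℝ × ℝ → F) (p : ℝ × ℝ) (hf : DifferentiableAt ℝ f p) :
    HasDerivAt (fun x => f (x, p.2)) (fderiv ℝ f p (1, 0)) p.1 := by
  have hline : HasDerivAt (fun x : ℝ => (x, p.2)) ((1 : ℝ), (0 : ℝ)) p.1 :=
    (hasDerivAt_id p.1).prodMk (hasDerivAt_const p.1 p.2)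
  have hF : HasFDerivAt f (fderiv ℝ f p) (p.1, p.2) := by
    rw [Prod.mk.eta]; exact hf.hasFDerivAt
  exact hF.comp_hasDerivAt p.1 hline

lemma hasDerivAt_snd (f : ℝ × ℝ → F) (p : ℝ × ℝ) (hf : DifferentiableAt ℝ f p) :
    HasDerivAt (fun y => f (p.1, y)) (fderiv ℝ f p (0, 1)) p.2 := by
  have hline : HasDerivAt (fun y : ℝ => (p.1, y)) ((0 : ℝ), (1 : ℝ)) p.2 :=
    (hasDerivAt_const p.2 p.1).prodMk (hasDerivAt_id p.2)
  have hF : HasFDerivAt f (fderiv ℝ f p) (p.1, p.2) := by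
    rw [Prod.mk.eta]; exact hf.hasFDerivAt
  exact hF.comp_hasDerivAt p.2 hline

end helpers

section mixed

variable {f : ℝ × ℝ → ℝ} {s : Set (ℝ × ℝ)} {p : ℝ × ℝ}

lemma pda_eq_fderiv (hf : DifferentiableAt ℝ f p) : pda f p = fderiv ℝ f p (1, 0) := by
  have h := hasDerivAt_fst f p hf
  have : HasDerivAt (fun x => f (x, p.2)) (fderiv ℝ f p (1,0)) p.1 := h
  exact this.deriv

lemma pdb_eq_fderiv (hf : DifferentiableAt ℝ f p) : pdb f p = fderiv ℝ f p (0, 1) :=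
  (hasDerivAt_snd f p hf).deriv

lemma hasDerivAt_pda_snd (hs : IsOpen s) (hp : p ∈ s) (hf : ContDiffOn ℝ (⊤ : ℕ∞) f s) :
    HasDerivAt (fun y => pda f (p.1, y)) (fderiv ℝ (fderiv ℝ f) p (0, 1) (1, 0)) p.2 := by
  set g := fderiv ℝ f with hg
  have hfc : ContDiffAt ℝ 2 f p := (hf.contDiffAt (hs.mem_nhds hp)).of_le (WithTop.coe_le_coe.mpr le_top)
  have hgd : DifferentiableAt ℝ g p :=
    (hfc.fderiv_right (m := 1) le_rfl).differentiableAt one_ne_zero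
  -- the smooth version of the function
  have hg2 : HasDerivAt (fun y => g (p.1, y)) (fderiv ℝ g p (0, 1)) p.2 :=
    hasDerivAt_snd g p hgd
  have happ : HasDerivAt (fun y => g (p.1, y) (1, 0)) (fderiv ℝ g p (0, 1) (1, 0)) p.2 := by
    have := hg2.clm_apply (hasDerivAt_const p.2 ((1 : ℝ), (0 : ℝ)))
    simpa using this
  -- eventual equality
  have hev : ∀ᶠ q in nhds p, pda f q = g q (1, 0) := by
    filter_upwards [hs.mem_nhds hp] with q hq
    have hd : DifferentiableAt ℝ f q :=
      ((hf.contDiffAt (hs.mem_nhds hq)).of_le (WithTop.coe_le_coe.mpr le_top)).differentiableAt (n := 2) two_ne_zero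
    exact pda_eq_fderiv hd
  have hev2 : (fun y => pda f (p.1, y)) =ᶠ[nhds p.2] fun y => g (p.1, y) (1, 0) := by
    have hc : ContinuousAt (fun y : ℝ => (p.1, y)) p.2 :=
      (continuous_const.prodMk continuous_id).continuousAt
    have := hc.tendsto.eventually (by rw [Prod.mk.eta]; exact hev)
    exact this
  exact happ.congr_of_eventuallyEq hev2

lemma hasDerivAt_pdb_fst (hs : IsOpen s) (hp : p ∈ s) (hf : ContDiffOn ℝ (⊤ : ℕ∞) f s) :
    HasDerivAt (fun x => pdb f (x, p.2)) (fderiv ℝ (fderiv ℝ f) p (0, 1) (1, 0)) p.1 := by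
  set g := fderiv ℝ f with hg
  have hfc : ContDiffAt ℝ 2 f p := (hf.contDiffAt (hs.mem_nhds hp)).of_le (WithTop.coe_le_coe.mpr le_top)
  have hgd : DifferentiableAt ℝ g p :=
    (hfc.fderiv_right (m := 1) le_rfl).differentiableAt one_ne_zero
  have hsym : fderiv ℝ g p (1, 0) (0, 1) = fderiv ℝ g p (0, 1) (1, 0) :=
    (hfc.isSymmSndFDerivAt (by simp)) _ _
  have hg1 : HasDerivAt (fun x => g (x, p.2)) (fderiv ℝ g p (1, 0)) p.1 :=
    hasDerivAt_fst g p hgd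
  have happ : HasDerivAt (fun x => g (x, p.2) (0, 1)) (fderiv ℝ g p (1, 0) (0, 1)) p.1 := by
    have := hg1.clm_apply (hasDerivAt_const p.1 ((0 : ℝ), (1 : ℝ)))
    simpa using this
  have hev : ∀ᶠ q in nhds p, pdb f q = g q (0, 1) := by
    filter_upwards [hs.mem_nhds hp] with q hq
    have hd : DifferentiableAt ℝ f q :=
      ((hf.contDiffAt (hs.mem_nhds hq)).of_le (WithTop.coe_le_coe.mpr le_top)).differentiableAt (n := 2) two_ne_zero
    exact pdb_eq_fderiv hd
  have hev2 : (fun x => pdb f (x, p.2)) =ᶠ[nhds p.1] fun x => g (x, p.2) (0, 1) := by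
    have hc : ContinuousAt (fun x : ℝ => (x, p.2)) p.1 :=
      (continuous_id.prodMk continuous_const).continuousAt
    exact hc.tendsto.eventually (by rw [Prod.mk.eta]; exact hev)
  have := happ.congr_of_eventuallyEq hev2
  rwa [hsym] at this

end mixed

set_option maxHeartbeats 4000000 in
/-- Zero curvature / Lax pair for S[U;δ]. -/
theorem zero_curvature_SUdelta
    (n m : ℤ) (δ lam : ℝ) (U u1 u2 : ℝ × ℝ → ℝ)
    (D : Set (ℝ × ℝ)) (hD : IsOpen D)
    (hαβ : ∀ p ∈ D, p.1 ≠ p.2)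
    (hal : ∀ p ∈ D, p.1 ≠ lam) (hbl : ∀ p ∈ D, p.2 ≠ lam)
    (hU : ContDiffOn ℝ (⊤ : ℕ∞) U D)
    (hu1 : ContDiffOn ℝ (⊤ : ℕ∞) u1 D) (hu2 : ContDiffOn ℝ (⊤ : ℕ∞) u2 D)
    (hsys : ∀ p ∈ D, SUdelta n m δ U u1 u2 p) :
    ∀ p ∈ D,
      pdbM (laxL n δ lam U u1) p - pdaM (laxN m δ lam U u2) p
        + laxL n δ lam U u1 p * laxN m δ lam U u2 p
        - laxN m δ lam U u2 p * laxL n δ lam U u1 p = 0 := by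
  intro p hp
  have hab : p.1 - p.2 ≠ 0 := sub_ne_zero.mpr (hαβ p hp)
  have hal' : p.1 - lam ≠ 0 := sub_ne_zero.mpr (hal p hp)
  have hbl' : p.2 - lam ≠ 0 := sub_ne_zero.mpr (hbl p hp)
  have hUd : DifferentiableAt ℝ U p :=
    ((hU.contDiffAt (hD.mem_nhds hp)).of_le (WithTop.coe_le_coe.mpr le_top)).differentiableAt (n := 2) two_ne_zero
  have hu1d : DifferentiableAt ℝ u1 p :=
    ((hu1.contDiffAt (hD.mem_nhds hp)).of_le (WithTop.coe_le_coe.mpr le_top)).differentiableAt (n := 2) two_ne_zero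
  have hu2d : DifferentiableAt ℝ u2 p :=
    ((hu2.contDiffAt (hD.mem_nhds hp)).of_le (WithTop.coe_le_coe.mpr le_top)).differentiableAt (n := 2) two_ne_zero
  have hu1b := hasDerivAt_snd u1 p hu1d
  have hu2a := hasDerivAt_fst u2 p hu2d
  have hUab := hasDerivAt_pda_snd hD hp hU
  have hUba := hasDerivAt_pdb_fst hD hp hU
  have epa : pda U p = fderiv ℝ U p (1, 0) := pda_eq_fderiv hUd
  have epb : pdb U p = fderiv ℝ U p (0, 1) := pdb_eq_fderiv hUd
  have e1 : pdb u1 p = fderiv ℝ u1 p (0, 1) := pdb_eq_fderiv hu1d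
  have e3 : pda u2 p = fderiv ℝ u2 p (1, 0) := pda_eq_fderiv hu2d
  have eW : pdb (pda U) p = fderiv ℝ (fderiv ℝ U) p (0, 1) (1, 0) := hUab.deriv
  obtain ⟨hG1, hG2, hG3⟩ := hsys p hp
  rw [e1, epb] at hG1
  rw [e3, epa] at hG2
  rw [eW, epa, epb] at hG3
  have hdL00 : HasDerivAt (fun y => (1/(p.1 - lam)) * ((n : ℝ) + u1 (p.1, y) * pda U (p.1, y))) ((1/(p.1 - lam)) * (fderiv ℝ u1 p (0, 1) * fderiv ℝ U p (1, 0) + u1 p * fderiv ℝ (fderiv ℝ U) p (0, 1) (1, 0))) p.2 := by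
    have h := ((hasDerivAt_const p.2 ((n : ℝ))).add (hu1b.mul hUab)).const_mul (1/(p.1 - lam))
    convert h using 1 <;> (try rfl) <;> rw [Prod.mk.eta] <;> rw [epa] <;> ring
  have hE00 : HasDerivAt (fun y => laxL n δ lam U u1 (p.1, y) 0 0) ((1/(p.1 - lam)) * (fderiv ℝ u1 p (0, 1) * fderiv ℝ U p (1, 0) + u1 p * fderiv ℝ (fderiv ℝ U) p (0, 1) (1, 0))) p.2 := by
    have hfun : (fun y => laxL n δ lam U u1 (p.1, y) 0 0) = (fun y => (1/(p.1 - lam)) * ((n : ℝ) + u1 (p.1, y) * pda U (p.1, y))) := by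
      funext y
      simp [laxL] <;> ring
    rw [hfun]; exact hdL00
  have hdL01 : HasDerivAt (fun y => (1/(p.1 - lam)) * (-pda U (p.1, y))) ((1/(p.1 - lam)) * (-(fderiv ℝ (fderiv ℝ U) p (0, 1) (1, 0)))) p.2 := by
    have h := hUab.neg.const_mul (1/(p.1 - lam))
    convert h using 1 <;> (try rfl) <;> rw [Prod.mk.eta] <;> rw [epa] <;> ring
  have hE01 : HasDerivAt (fun y => laxL n δ lam U u1 (p.1, y) 0 1) ((1/(p.1 - lam)) * (-(fderiv ℝ (fderiv ℝ U) p (0, 1) (1, 0)))) p.2 := by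
    have hfun : (fun y => laxL n δ lam U u1 (p.1, y) 0 1) = (fun y => (1/(p.1 - lam)) * (-pda U (p.1, y))) := by
      funext y
      simp [laxL] <;> ring
    rw [hfun]; exact hdL01
  have hdL10 : HasDerivAt (fun y => (1/(p.1 - lam)) * (u1 (p.1, y) * ((n : ℝ) + u1 (p.1, y) * pda U (p.1, y))) - δ ^ 2 * (p.1 - lam) * pda U (p.1, y)) ((1/(p.1 - lam)) * (fderiv ℝ u1 p (0, 1) * ((n : ℝ) + u1 p * fderiv ℝ U p (1, 0)) + u1 p * (fderiv ℝ u1 p (0, 1) * fderiv ℝ U p (1, 0) + u1 p * fderiv ℝ (fderiv ℝ U) p (0, 1) (1, 0))) - δ ^ 2 * (p.1 - lam) * (fderiv ℝ (fderiv ℝ U) p (0, 1) (1, 0))) p.2 := by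
    have h := ((hu1b.mul ((hasDerivAt_const p.2 ((n : ℝ))).add (hu1b.mul hUab))).const_mul (1/(p.1 - lam))).sub (hUab.const_mul (δ ^ 2 * (p.1 - lam)))
    convert h using 1 <;> (try rfl) <;> rw [Prod.mk.eta] <;> rw [epa] <;> (try simp only [Pi.add_apply, Pi.mul_apply, Prod.mk.eta, epa, epb]) <;> ring
  have hE10 : HasDerivAt (fun y => laxL n δ lam U u1 (p.1, y) 1 0) ((1/(p.1 - lam)) * (fderiv ℝ u1 p (0, 1) * ((n : ℝ) + u1 p * fderiv ℝ U p (1, 0)) + u1 p * (fderiv ℝ u1 p (0, 1) * fderiv ℝ U p (1, 0) + u1 p * fderiv ℝ (fderiv ℝ U) p (0, 1) (1, 0))) - δ ^ 2 * (p.1 - lam) * (fderiv ℝ (fderiv ℝ U) p (0, 1) (1, 0))) p.2 := by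
    have hfun : (fun y => laxL n δ lam U u1 (p.1, y) 1 0) = (fun y => (1/(p.1 - lam)) * (u1 (p.1, y) * ((n : ℝ) + u1 (p.1, y) * pda U (p.1, y))) - δ ^ 2 * (p.1 - lam) * pda U (p.1, y)) := by
      funext y
      simp [laxL] <;> ring
    rw [hfun]; exact hdL10
  have hdL11 : HasDerivAt (fun y => (1/(p.1 - lam)) * (-(u1 (p.1, y) * pda U (p.1, y)))) ((1/(p.1 - lam)) * (-(fderiv ℝ u1 p (0, 1) * fderiv ℝ U p (1, 0) + u1 p * fderiv ℝ (fderiv ℝ U) p (0, 1) (1, 0)))) p.2 := by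
    have h := ((hu1b.mul hUab)).neg.const_mul (1/(p.1 - lam))
    convert h using 1 <;> (try rfl) <;> rw [Prod.mk.eta] <;> rw [epa] <;> ring
  have hE11 : HasDerivAt (fun y => laxL n δ lam U u1 (p.1, y) 1 1) ((1/(p.1 - lam)) * (-(fderiv ℝ u1 p (0, 1) * fderiv ℝ U p (1, 0) + u1 p * fderiv ℝ (fderiv ℝ U) p (0, 1) (1, 0)))) p.2 := by
    have hfun : (fun y => laxL n δ lam U u1 (p.1, y) 1 1) = (fun y => (1/(p.1 - lam)) * (-(u1 (p.1, y) * pda U (p.1, y)))) := by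
      funext y
      simp [laxL] <;> ring
    rw [hfun]; exact hdL11
  have hdN00 : HasDerivAt (fun x => (1/(p.2 - lam)) * ((m : ℝ) + u2 (x, p.2) * pdb U (x, p.2))) ((1/(p.2 - lam)) * (fderiv ℝ u2 p (1, 0) * fderiv ℝ U p (0, 1) + u2 p * fderiv ℝ (fderiv ℝ U) p (0, 1) (1, 0))) p.1 := by
    have h := ((hasDerivAt_const p.1 ((m : ℝ))).add (hu2a.mul hUba)).const_mul (1/(p.2 - lam))
    convert h using 1 <;> (try rfl) <;> rw [Prod.mk.eta] <;> rw [epb] <;> ring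
  have hF00 : HasDerivAt (fun x => laxN m δ lam U u2 (x, p.2) 0 0) ((1/(p.2 - lam)) * (fderiv ℝ u2 p (1, 0) * fderiv ℝ U p (0, 1) + u2 p * fderiv ℝ (fderiv ℝ U) p (0, 1) (1, 0))) p.1 := by
    have hfun : (fun x => laxN m δ lam U u2 (x, p.2) 0 0) = (fun x => (1/(p.2 - lam)) * ((m : ℝ) + u2 (x, p.2) * pdb U (x, p.2))) := by
      funext x
      simp [laxN] <;> ring
    rw [hfun]; exact hdN00
  have hdN01 : HasDerivAt (fun x => (1/(p.2 - lam)) * (-pdb U (x, p.2))) ((1/(p.2 - lam)) * (-(fderiv ℝ (fderiv ℝ U) p (0, 1) (1, 0)))) p.1 := by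
    have h := hUba.neg.const_mul (1/(p.2 - lam))
    convert h using 1 <;> (try rfl) <;> rw [Prod.mk.eta] <;> rw [epb] <;> ring
  have hF01 : HasDerivAt (fun x => laxN m δ lam U u2 (x, p.2) 0 1) ((1/(p.2 - lam)) * (-(fderiv ℝ (fderiv ℝ U) p (0, 1) (1, 0)))) p.1 := by
    have hfun : (fun x => laxN m δ lam U u2 (x, p.2) 0 1) = (fun x => (1/(p.2 - lam)) * (-pdb U (x, p.2))) := by
      funext x
      simp [laxN] <;> ring
    rw [hfun]; exact hdN01
  have hdN10 : HasDerivAt (fun x => (1/(p.2 - lam)) * (u2 (x, p.2) * ((m : ℝ) + u2 (x, p.2) * pdb U (x, p.2))) - δ ^ 2 * (p.2 - lam) * pdb U (x, p.2)) ((1/(p.2 - lam)) * (fderiv ℝ u2 p (1, 0) * ((m : ℝ) + u2 p * fderiv ℝ U p (0, 1)) + u2 p * (fderiv ℝ u2 p (1, 0) * fderiv ℝ U p (0, 1) + u2 p * fderiv ℝ (fderiv ℝ U) p (0, 1) (1, 0))) - δ ^ 2 * (p.2 - lam) * (fderiv ℝ (fderiv ℝ U) p (0, 1) (1, 0))) p.1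 := by
    have h := ((hu2a.mul ((hasDerivAt_const p.1 ((m : ℝ))).add (hu2a.mul hUba))).const_mul (1/(p.2 - lam))).sub (hUba.const_mul (δ ^ 2 * (p.2 - lam)))
    convert h using 1 <;> (try rfl) <;> rw [Prod.mk.eta] <;> rw [epb] <;> (try simp only [Pi.add_apply, Pi.mul_apply, Prod.mk.eta, epa, epb]) <;> ring
  have hF10 : HasDerivAt (fun x => laxN m δ lam U u2 (x, p.2) 1 0) ((1/(p.2 - lam)) * (fderiv ℝ u2 p (1, 0) * ((m : ℝ) + u2 p * fderiv ℝ U p (0, 1)) + u2 p * (fderiv ℝ u2 p (1, 0) * fderiv ℝ U p (0, 1) + u2 p * fderiv ℝ (fderiv ℝ U) p (0, 1) (1, 0))) - δ ^ 2 * (p.2 - lam) * (fderiv ℝ (fderiv ℝ U) p (0, 1) (1, 0))) p.1 := by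
    have hfun : (fun x => laxN m δ lam U u2 (x, p.2) 1 0) = (fun x => (1/(p.2 - lam)) * (u2 (x, p.2) * ((m : ℝ) + u2 (x, p.2) * pdb U (x, p.2))) - δ ^ 2 * (p.2 - lam) * pdb U (x, p.2)) := by
      funext x
      simp [laxN] <;> ring
    rw [hfun]; exact hdN10
  have hdN11 : HasDerivAt (fun x => (1/(p.2 - lam)) * (-(u2 (x, p.2) * pdb U (x, p.2)))) ((1/(p.2 - lam)) * (-(fderiv ℝ u2 p (1, 0) * fderiv ℝ U p (0, 1) + u2 p * fderiv ℝ (fderiv ℝ U) p (0, 1) (1, 0)))) p.1 := by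
    have h := ((hu2a.mul hUba)).neg.const_mul (1/(p.2 - lam))
    convert h using 1 <;> (try rfl) <;> rw [Prod.mk.eta] <;> rw [epb] <;> ring
  have hF11 : HasDerivAt (fun x => laxN m δ lam U u2 (x, p.2) 1 1) ((1/(p.2 - lam)) * (-(fderiv ℝ u2 p (1, 0) * fderiv ℝ U p (0, 1) + u2 p * fderiv ℝ (fderiv ℝ U) p (0, 1) (1, 0)))) p.1 := by
    have hfun : (fun x => laxN m δ lam U u2 (x, p.2) 1 1) = (fun x => (1/(p.2 - lam)) * (-(u2 (x, p.2) * pdb U (x, p.2)))) := by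
      funext x
      simp [laxN] <;> ring
    rw [hfun]; exact hdN11
  have hLb : pdbM (laxL n δ lam U u1) p =
      !![(1/(p.1 - lam)) * (fderiv ℝ u1 p (0, 1) * fderiv ℝ U p (1, 0) + u1 p * fderiv ℝ (fderiv ℝ U) p (0, 1) (1, 0)), (1/(p.1 - lam)) * (-(fderiv ℝ (fderiv ℝ U) p (0, 1) (1, 0))); (1/(p.1 - lam)) * (fderiv ℝ u1 p (0, 1) * ((n : ℝ) + u1 p * fderiv ℝ U p (1, 0)) + u1 p * (fderiv ℝ u1 p (0, 1) * fderiv ℝ U p (1, 0) + u1 p * fderiv ℝ (fderiv ℝ U) p (0, 1) (1, 0))) - δ ^ 2 * (p.1 - lam) * (fderiv ℝ (fderiv ℝ U) p (0, 1) (1, 0)), (1/(p.1 - lam)) * (-(fderiv ℝ u1 p (0, 1) * fderiv ℝ U p (1, 0) + u1 p * fderiv ℝ (fderiv ℝ U) p (0, 1) (1, 0)))] := by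
    ext i j
    fin_cases i <;> fin_cases j
    · exact hE00.deriv
    · exact hE01.deriv
    · exact hE10.deriv
    · exact hE11.deriv
  have hNa : pdaM (laxN m δ lam U u2) p =
      !![(1/(p.2 - lam)) * (fderiv ℝ u2 p (1, 0) * fderiv ℝ U p (0, 1) + u2 p * fderiv ℝ (fderiv ℝ U) p (0, 1) (1, 0)), (1/(p.2 - lam)) * (-(fderiv ℝ (fderiv ℝ U) p (0, 1) (1, 0))); (1/(p.2 - lam)) * (fderiv ℝ u2 p (1, 0) * ((m : ℝ) + u2 p * fderiv ℝ U p (0, 1)) + u2 p * (fderiv ℝ u2 p (1, 0) * fderiv ℝ U p (0, 1) + u2 p * fderiv ℝ (fderiv ℝ U) p (0, 1) (1, 0))) - δ ^ 2 * (p.2 - lam) * (fderiv ℝ (fderiv ℝ U) p (0, 1) (1, 0)), (1/(p.2 - lam)) * (-(fderiv ℝ u2 p (1, 0) * fderiv ℝ U p (0, 1) + u2 p * fderiv ℝ (fderiv ℝ U) p (0, 1) (1, 0)))] := by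
    ext i j
    fin_cases i <;> fin_cases j
    · exact hF00.deriv
    · exact hF01.deriv
    · exact hF10.deriv
    · exact hF11.deriv
  have hLp : laxL n δ lam U u1 p =
      !![(1/(p.1 - lam)) * ((n : ℝ) + u1 p * fderiv ℝ U p (1, 0)), (1/(p.1 - lam)) * (-(fderiv ℝ U p (1, 0)));
         (1/(p.1 - lam)) * (u1 p * ((n : ℝ) + u1 p * fderiv ℝ U p (1, 0))) - δ ^ 2 * (p.1 - lam) * fderiv ℝ U p (1, 0), (1/(p.1 - lam)) * (-(u1 p * fderiv ℝ U p (1, 0)))] := by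
    ext i j
    fin_cases i <;> fin_cases j <;> simp [laxL, epa] <;> ring
  have hNp : laxN m δ lam U u2 p =
      !![(1/(p.2 - lam)) * ((m : ℝ) + u2 p * fderiv ℝ U p (0, 1)), (1/(p.2 - lam)) * (-(fderiv ℝ U p (0, 1)));
         (1/(p.2 - lam)) * (u2 p * ((m : ℝ) + u2 p * fderiv ℝ U p (0, 1))) - δ ^ 2 * (p.2 - lam) * fderiv ℝ U p (0, 1), (1/(p.2 - lam)) * (-(u2 p * fderiv ℝ U p (0, 1)))] := by
    ext i j
    fin_cases i <;> fin_cases j <;> simp [laxN, epb] <;> ring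
  rw [hLb, hNa, hLp, hNp]
  ext i j
  fin_cases i <;> fin_cases j <;>
    simp only [Matrix.sub_apply, Matrix.add_apply, Matrix.mul_apply, Fin.sum_univ_two,
      Matrix.cons_val', Matrix.cons_val_zero, Matrix.cons_val_one, Matrix.head_cons,
      Matrix.head_fin_const, Matrix.empty_val', Matrix.cons_val_fin_one, Matrix.zero_apply, Matrix.of_apply, Fin.zero_eta, Fin.mk_one] <;>
    (try rw [hG1]) <;> (try rw [hG2]) <;> (try rw [hG3]) <;>
    field_simp <;>
    ring
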